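/- For any two square-integrable real random variables X₁ ~ F₁ and X₂ ~ F₂ with given marginal distributions, E(X₁X₂) ≥ E(F₁⁻¹(U)F₂⁻¹(1−U)) where U is uniform on [0,1], i.e., the antimonotonic coupling minimizes the expected product in dimension 2. -/

import Mathlib

/-!
Writing `x = ∫ (𝟙[s < x] - 𝟙[s < 0]) ds` for both factors and applying Fubini gives Hoeffding's
representation of `E[XY]` as a plane integral whose integrand is the joint survival function
`P(X > s, Y > t)` plus terms depending only on the marginals. Among all couplings of given
marginals, the survival function is pointwise smallest, equal to the Fréchet lower bound
`max (1 - F₁ s - F₂ t) 0`, for the antitone coupling `(F₁⁻¹(U), F₂⁻¹(1 - U))`.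
-/

open MeasureTheory Set

/-- Generalized inverse (quantile function). -/
noncomputable def quantile (ν : Measure ℝ) (u : ℝ) : ℝ :=
  sInf {x : ℝ | u ≤ (ν (Iic x)).toReal}

open ProbabilityTheory

section Quantile

variable {ν : Measure ℝ} {u x : ℝ}

lemma quantile_eq_sInf_cdf (ν : Measure ℝ) [IsProbabilityMeasure ν] (u : ℝ) :
    quantile ν u = sInf {x | u ≤ cdf ν x} := by
  simp [quantile, cdf_eq_real, measureReal_def]

lemma bddBelow_cdf_ge (hu : 0 < u) : BddBelow {x | u ≤ cdf ν x} := by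
  obtain ⟨x₀, hx₀⟩ := ((tendsto_cdf_atBot ν).eventually_lt_const hu).exists
  exact ⟨x₀, fun x hx => le_of_not_gt fun hlt => (hx.trans (monotone_cdf ν hlt.le)).not_gt hx₀⟩

lemma nonempty_cdf_ge (hu : u < 1) : {x | u ≤ cdf ν x}.Nonempty :=
  ((tendsto_cdf_atTop ν).eventually_const_le hu).exists

lemma le_cdf_quantile [IsProbabilityMeasure ν] (hu : u ∈ Ioo 0 1) :
    u ≤ cdf ν (quantile ν u) := by
  rw [← (cdf ν).iInf_Ioi_eq]
  refine le_ciInf fun ⟨x, hx⟩ => ?_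
  rw [mem_Ioi, quantile_eq_sInf_cdf] at hx
  obtain ⟨y, hy, hyx⟩ := exists_lt_of_csInf_lt (nonempty_cdf_ge hu.2) hx
  exact hy.trans (monotone_cdf ν hyx.le)

lemma quantile_le_iff [IsProbabilityMeasure ν] (hu : u ∈ Ioo 0 1) :
    quantile ν u ≤ x ↔ u ≤ cdf ν x :=
  ⟨fun h => (le_cdf_quantile hu).trans (monotone_cdf ν h), fun h => by
    rw [quantile_eq_sInf_cdf]; exact csInf_le (bddBelow_cdf_ge hu.1) h⟩

lemma lt_quantile_iff [IsProbabilityMeasure ν] (hu : u ∈ Ioo 0 1) :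
    x < quantile ν u ↔ cdf ν x < u := by
  simpa only [not_le] using (quantile_le_iff hu).not

lemma monotoneOn_quantile [IsProbabilityMeasure ν] : MonotoneOn (quantile ν) (Ioo 0 1) :=
  fun _ hu _ hv huv => (quantile_le_iff hu).2 (huv.trans (le_cdf_quantile hv))

lemma aemeasurable_quantile [IsProbabilityMeasure ν] :
    AEMeasurable (quantile ν) (volume.restrict (Ioo 0 1)) :=
  aemeasurable_restrict_of_monotoneOn measurableSet_Ioo monotoneOn_quantile

end Quantile

noncomputable def signedStep (x s : ℝ) : ℝ :=
  (if s < x then 1 else 0) - if s < 0 then 1 else 0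

lemma measurable_signedStep : Measurable fun p : ℝ × ℝ => signedStep p.1 p.2 :=
  (measurable_const.ite (measurableSet_lt measurable_snd measurable_fst) measurable_const).sub
    (measurable_const.ite (measurableSet_lt measurable_snd measurable_const) measurable_const)

lemma signedStep_eq_indicator (x s : ℝ) :
    signedStep x s = (Ico 0 x).indicator 1 s - (Ico x 0).indicator 1 s := by
  simp only [signedStep, indicator, mem_Ico, Pi.one_apply]
  split_ifs <;> grind

lemma abs_signedStep (x s : ℝ) :
    |signedStep x s| = (Ico 0 x).indicator 1 s + (Ico x 0).indicator 1 s := by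
  simp only [signedStep, indicator, mem_Ico, Pi.one_apply]
  split_ifs <;> grind

lemma integrable_indicator_Ico_one (a b : ℝ) : Integrable ((Ico a b).indicator (1 : ℝ → ℝ)) :=
  (integrable_indicator_iff measurableSet_Ico).2 (integrableOn_const measure_Ico_lt_top.ne)

lemma integrable_signedStep (x : ℝ) : Integrable (signedStep x) := by
  simp_rw [funext (signedStep_eq_indicator x)]
  exact (integrable_indicator_Ico_one _ _).sub (integrable_indicator_Ico_one _ _)

lemma integral_signedStep (x : ℝ) : ∫ s, signedStep x s = x := by
  simp_rw [signedStep_eq_indicator]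
  rw [integral_sub (integrable_indicator_Ico_one _ _) (integrable_indicator_Ico_one _ _),
    integral_indicator_one measurableSet_Ico, integral_indicator_one measurableSet_Ico,
    Real.volume_real_Ico, Real.volume_real_Ico]
  grind

lemma integral_abs_signedStep (x : ℝ) : ∫ s, |signedStep x s| = |x| := by
  simp_rw [abs_signedStep]
  rw [integral_add (integrable_indicator_Ico_one _ _) (integrable_indicator_Ico_one _ _),
    integral_indicator_one measurableSet_Ico, integral_indicator_one measurableSet_Ico,
    Real.volume_real_Ico, Real.volume_real_Ico]
  grind

lemma integrable_signedStep_mul_signedStep (x y : ℝ) :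
    Integrable (fun st : ℝ × ℝ => signedStep x st.1 * signedStep y st.2) := by
  rw [Measure.volume_eq_prod]
  exact (integrable_signedStep x).mul_prod (integrable_signedStep y)

lemma integral_signedStep_mul_signedStep (x y : ℝ) :
    ∫ st : ℝ × ℝ, signedStep x st.1 * signedStep y st.2 = x * y := by
  rw [Measure.volume_eq_prod, integral_prod_mul, integral_signedStep, integral_signedStep]

lemma integral_abs_signedStep_mul_signedStep (x y : ℝ) :
    ∫ st : ℝ × ℝ, |signedStep x st.1 * signedStep y st.2| = |x * y| := by
  simp_rw [abs_mul]
  rw [Measure.volume_eq_prod, ← integral_abs_signedStep, ← integral_abs_signedStep]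
  exact integral_prod_mul (fun s => |signedStep x s|) (fun t => |signedStep y t|)

section Hoeffding

variable {π : Measure (ℝ × ℝ)}

lemma integrable_prod_signedStep_mul_signedStep [SFinite π]
    (hπ : Integrable (fun p : ℝ × ℝ => p.1 * p.2) π) :
    Integrable (fun z : (ℝ × ℝ) × (ℝ × ℝ) => signedStep z.1.1 z.2.1 * signedStep z.1.2 z.2.2)
      (π.prod volume) := by
  have hmeas : Measurable fun z : (ℝ × ℝ) × (ℝ × ℝ) =>
      signedStep z.1.1 z.2.1 * signedStep z.1.2 z.2.2 :=
    (measurable_signedStep.comp (measurable_fst.fst.prodMk measurable_snd.fst)).mul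
      (measurable_signedStep.comp (measurable_fst.snd.prodMk measurable_snd.snd))
  refine (integrable_prod_iff hmeas.aestronglyMeasurable).2
    ⟨ae_of_all _ fun p => integrable_signedStep_mul_signedStep p.1 p.2, ?_⟩
  simp_rw [Real.norm_eq_abs, integral_abs_signedStep_mul_signedStep]
  exact hπ.abs

lemma integral_fst_mul_snd_eq_integral_integral [SFinite π]
    (hπ : Integrable (fun p : ℝ × ℝ => p.1 * p.2) π) :
    ∫ p, p.1 * p.2 ∂π = ∫ st : ℝ × ℝ, ∫ p, signedStep p.1 st.1 * signedStep p.2 st.2 ∂π := by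
  calc ∫ p, p.1 * p.2 ∂π
      = ∫ p, (∫ st : ℝ × ℝ, signedStep p.1 st.1 * signedStep p.2 st.2) ∂π :=
        integral_congr_ae (ae_of_all _ fun p : ℝ × ℝ =>
          (integral_signedStep_mul_signedStep p.1 p.2).symm)
    _ = _ := integral_integral_swap (integrable_prod_signedStep_mul_signedStep hπ)

lemma integral_signedStep_mul_signedStep_eq [IsProbabilityMeasure π] (s t : ℝ) :
    ∫ p, signedStep p.1 s * signedStep p.2 t ∂π =
      π.real (Ioi s ×ˢ Ioi t) - (if s < 0 then 1 else 0) * π.snd.real (Ioi t)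
        - (if t < 0 then 1 else 0) * π.fst.real (Ioi s)
        + (if s < 0 then 1 else 0) * (if t < 0 then 1 else 0) := by
  have hS : MeasurableSet (Ioi s ×ˢ Ioi t) := measurableSet_Ioi.prod measurableSet_Ioi
  have hsnd : MeasurableSet (Prod.snd ⁻¹' Ioi t : Set (ℝ × ℝ)) := measurable_snd measurableSet_Ioi
  have hfst : MeasurableSet (Prod.fst ⁻¹' Ioi s : Set (ℝ × ℝ)) := measurable_fst measurableSet_Ioi
  have hind {A : Set (ℝ × ℝ)} (hA : MeasurableSet A) : Integrable (A.indicator (1 : ℝ × ℝ → ℝ)) π :=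
    (integrable_const (1 : ℝ)).indicator hA
  have hpt (p : ℝ × ℝ) : signedStep p.1 s * signedStep p.2 t =
      (Ioi s ×ˢ Ioi t).indicator 1 p - (if s < 0 then 1 else 0) * (Prod.snd ⁻¹' Ioi t).indicator 1 p
        - (if t < 0 then 1 else 0) * (Prod.fst ⁻¹' Ioi s).indicator 1 p
        + (if s < 0 then 1 else 0) * (if t < 0 then 1 else 0) := by
    simp only [signedStep, indicator, mem_prod, mem_preimage, mem_Ioi, Pi.one_apply]
    split_ifs <;> grind
  have hA := hind hS
  have hB := (hind hsnd).const_mul (if s < 0 then 1 else 0)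
  have hC := (hind hfst).const_mul (if t < 0 then 1 else 0)
  rw [integral_congr_ae (ae_of_all _ hpt), integral_add, integral_sub, integral_sub,
    integral_const_mul, integral_const_mul, integral_indicator_one hS,
    integral_indicator_one hsnd, integral_indicator_one hfst, integral_const]
  · simp [measureReal_def, Measure.fst_apply measurableSet_Ioi, Measure.snd_apply measurableSet_Ioi]
  exacts [hA, hB, hA.sub hB, hC, (hA.sub hB).sub hC, integrable_const _]

lemma integrable_fst_mul_snd (h₁ : MemLp id 2 π.fst)
    (h₂ : MemLp id 2 π.snd) : Integrable (fun p : ℝ × ℝ => p.1 * p.2) π :=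
  ((memLp_map_measure_iff aestronglyMeasurable_id measurable_fst.aemeasurable).1 h₁).integrable_mul
    ((memLp_map_measure_iff aestronglyMeasurable_id measurable_snd.aemeasurable).1 h₂)

theorem integral_fst_mul_snd_le_of_measureReal_Ioi_prod_Ioi_le {π' : Measure (ℝ × ℝ)}
    [IsProbabilityMeasure π] [IsProbabilityMeasure π']
    (h₁ : π'.fst = π.fst) (h₂ : π'.snd = π.snd)
    (hL₁ : MemLp id 2 π.fst) (hL₂ : MemLp id 2 π.snd)
    (hle : ∀ s t, π'.real (Ioi s ×ˢ Ioi t) ≤ π.real (Ioi s ×ˢ Ioi t)) :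
    ∫ p, p.1 * p.2 ∂π' ≤ ∫ p, p.1 * p.2 ∂π := by
  have hπ := integrable_fst_mul_snd hL₁ hL₂
  have hπ' := integrable_fst_mul_snd (h₁ ▸ hL₁) (h₂ ▸ hL₂)
  rw [integral_fst_mul_snd_eq_integral_integral hπ, integral_fst_mul_snd_eq_integral_integral hπ']
  refine integral_mono (integrable_prod_signedStep_mul_signedStep hπ').integral_prod_right
    (integrable_prod_signedStep_mul_signedStep hπ).integral_prod_right fun st => ?_
  simp only [integral_signedStep_mul_signedStep_eq, h₁, h₂]
  linarith [hle st.1 st.2]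

end Hoeffding

instance : IsProbabilityMeasure (volume.restrict (Ioo (0 : ℝ) 1)) :=
  ⟨by simp⟩

lemma volume_Iic_inter_Ioo {c : ℝ} (hc : c ≤ 1) :
    volume (Iic c ∩ Ioo 0 1) = ENNReal.ofReal c := by
  refine le_antisymm ?_ ?_
  · calc volume (Iic c ∩ Ioo 0 1) ≤ volume (Icc 0 c) :=
          measure_mono fun u hu => ⟨hu.2.1.le, hu.1⟩
      _ = ENNReal.ofReal c := by rw [Real.volume_Icc, sub_zero]
  · calc ENNReal.ofReal c = volume (Ioo 0 c) := by rw [Real.volume_Ioo, sub_zero]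
      _ ≤ volume (Iic c ∩ Ioo 0 1) :=
          measure_mono fun u hu => ⟨hu.2.le, hu.1, hu.2.trans_le hc⟩

lemma map_quantile (ν : Measure ℝ) [IsProbabilityMeasure ν] :
    (volume.restrict (Ioo 0 1)).map (quantile ν) = ν := by
  refine Measure.ext_of_Iic _ _ fun x => ?_
  have hpre : quantile ν ⁻¹' Iic x ∩ Ioo 0 1 = Iic (cdf ν x) ∩ Ioo 0 1 := by
    ext u
    exact and_congr_left fun hu => quantile_le_iff hu
  rw [Measure.map_apply_of_aemeasurable aemeasurable_quantile measurableSet_Iic,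
    Measure.restrict_apply' measurableSet_Ioo, hpre,
    volume_Iic_inter_Ioo (cdf_le_one ν x), ofReal_cdf]

lemma measurePreserving_one_sub_restrict_Ioo :
    MeasurePreserving (fun u : ℝ => 1 - u) (volume.restrict (Ioo 0 1))
      (volume.restrict (Ioo 0 1)) := by
  have hpre : (fun u : ℝ => 1 - u) ⁻¹' Ioo 0 1 = Ioo 0 1 := by
    ext u; simp only [mem_preimage, mem_Ioo]; constructor <;> intro h <;> constructor <;> linarith
  have := ((volume : Measure ℝ).measurePreserving_sub_left 1).restrict_preimage
    (measurableSet_Ioo (a := 0) (b := 1))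
  rwa [hpre] at this

lemma aemeasurable_quantile_one_sub (ν : Measure ℝ) [IsProbabilityMeasure ν] :
    AEMeasurable (fun u => quantile ν (1 - u)) (volume.restrict (Ioo 0 1)) :=
  aemeasurable_quantile.comp_quasiMeasurePreserving
    measurePreserving_one_sub_restrict_Ioo.quasiMeasurePreserving

lemma map_quantile_one_sub (ν : Measure ℝ) [IsProbabilityMeasure ν] :
    (volume.restrict (Ioo 0 1)).map (fun u => quantile ν (1 - u)) = ν := by
  have hT := measurePreserving_one_sub_restrict_Ioo
  have := AEMeasurable.map_map_of_aemeasurable (g := quantile ν)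
    (by rw [hT.map_eq]; exact aemeasurable_quantile) hT.measurable.aemeasurable
  rw [Function.comp_def, hT.map_eq, map_quantile] at this
  exact this.symm

noncomputable def antitoneCoupling (ν₁ ν₂ : Measure ℝ) : Measure (ℝ × ℝ) :=
  (volume.restrict (Ioo 0 1)).map fun u => (quantile ν₁ u, quantile ν₂ (1 - u))

section AntitoneCoupling

variable (ν₁ ν₂ : Measure ℝ) [IsProbabilityMeasure ν₁] [IsProbabilityMeasure ν₂]

lemma aemeasurable_antitoneCoupling :
    AEMeasurable (fun u => (quantile ν₁ u, quantile ν₂ (1 - u))) (volume.restrict (Ioo 0 1)) :=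
  aemeasurable_quantile.prodMk (aemeasurable_quantile_one_sub ν₂)

instance : IsProbabilityMeasure (antitoneCoupling ν₁ ν₂) :=
  Measure.isProbabilityMeasure_map (aemeasurable_antitoneCoupling ν₁ ν₂)

lemma fst_antitoneCoupling : (antitoneCoupling ν₁ ν₂).fst = ν₁ := by
  rw [antitoneCoupling, Measure.fst_map_prodMk₀ (aemeasurable_quantile_one_sub ν₂), map_quantile]

lemma snd_antitoneCoupling : (antitoneCoupling ν₁ ν₂).snd = ν₂ := by
  rw [antitoneCoupling, Measure.snd_map_prodMk₀ aemeasurable_quantile, map_quantile_one_sub]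

lemma measureReal_antitoneCoupling_Ioi_prod_Ioi (s t : ℝ) :
    (antitoneCoupling ν₁ ν₂).real (Ioi s ×ˢ Ioi t) ≤ max (1 - cdf ν₁ s - cdf ν₂ t) 0 := by
  rw [antitoneCoupling, map_measureReal_apply_of_aemeasurable
    (aemeasurable_antitoneCoupling ν₁ ν₂) (measurableSet_Ioi.prod measurableSet_Ioi),
    measureReal_restrict_apply' measurableSet_Ioo]
  calc _ ≤ volume.real (Ioo (cdf ν₁ s) (1 - cdf ν₂ t)) := by
        refine measureReal_mono (fun u ⟨⟨hs, ht⟩, hu⟩ => ⟨(lt_quantile_iff hu).1 hs, ?_⟩)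
          measure_Ioo_lt_top.ne
        have := (lt_quantile_iff (ν := ν₂) ⟨sub_pos.2 hu.2, sub_lt_self 1 hu.1⟩).1 ht
        linarith
    _ = max (1 - cdf ν₁ s - cdf ν₂ t) 0 := by rw [Real.volume_real_Ioo, sub_right_comm]

end AntitoneCoupling

lemma one_sub_cdf_sub_cdf_le_measureReal (π : Measure (ℝ × ℝ)) [IsProbabilityMeasure π]
    (s t : ℝ) :
    1 - cdf π.fst s - cdf π.snd t ≤ π.real (Ioi s ×ˢ Ioi t) := by
  have hcompl : (Ioi s ×ˢ Ioi t)ᶜ = Prod.fst ⁻¹' Iic s ∪ Prod.snd ⁻¹' Iic t := by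
    ext; simp [or_iff_not_imp_left]
  have := measureReal_union_le (μ := π) (Prod.fst ⁻¹' Iic s) (Prod.snd ⁻¹' Iic t)
  rw [← hcompl, probReal_compl_eq_one_sub (measurableSet_Ioi.prod measurableSet_Ioi)] at this
  simp only [cdf_eq_real, measureReal_def, Measure.fst_apply measurableSet_Iic,
    Measure.snd_apply measurableSet_Iic] at this ⊢
  linarith

lemma measureReal_antitoneCoupling_le (π : Measure (ℝ × ℝ)) [IsProbabilityMeasure π] (s t : ℝ) :
    (antitoneCoupling π.fst π.snd).real (Ioi s ×ˢ Ioi t) ≤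
      π.real (Ioi s ×ˢ Ioi t) :=
  (measureReal_antitoneCoupling_Ioi_prod_Ioi _ _ s t).trans
    (max_le (one_sub_cdf_sub_cdf_le_measureReal π s t) measureReal_nonneg)

theorem integral_antitoneCoupling_le (π : Measure (ℝ × ℝ)) [IsProbabilityMeasure π]
    (hL₁ : MemLp id 2 π.fst) (hL₂ : MemLp id 2 π.snd) :
    ∫ p, p.1 * p.2 ∂antitoneCoupling π.fst π.snd ≤ ∫ p, p.1 * p.2 ∂π :=
  integral_fst_mul_snd_le_of_measureReal_Ioi_prod_Ioi_le (fst_antitoneCoupling _ _)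
    (snd_antitoneCoupling _ _) hL₁ hL₂ (measureReal_antitoneCoupling_le π)

/-- The antimonotonic coupling minimizes `E(X₁X₂)` among couplings with fixed marginals. -/
theorem stmt_1 {Ω : Type*} [MeasurableSpace Ω] (μ : Measure Ω) [IsProbabilityMeasure μ]
    (X₁ X₂ : Ω → ℝ) (F₁ F₂ : Measure ℝ)
    [IsProbabilityMeasure F₁] [IsProbabilityMeasure F₂]
    (hm₁ : Measurable X₁) (hm₂ : Measurable X₂)
    (hd₁ : μ.map X₁ = F₁) (hd₂ : μ.map X₂ = F₂)
    (hL₁ : MemLp X₁ 2 μ) (hL₂ : MemLp X₂ 2 μ) :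
    ∫ u in Icc (0:ℝ) 1, quantile F₁ u * quantile F₂ (1 - u) ≤ ∫ ω, X₁ ω * X₂ ω ∂μ := by
  have hX : Measurable fun ω => (X₁ ω, X₂ ω) := hm₁.prodMk hm₂
  set π := μ.map fun ω => (X₁ ω, X₂ ω)
  have : IsProbabilityMeasure π := Measure.isProbabilityMeasure_map hX.aemeasurable
  have hπ₁ : π.fst = F₁ := (Measure.fst_map_prodMk hm₂).trans hd₁
  have hπ₂ : π.snd = F₂ := (Measure.snd_map_prodMk hm₁).trans hd₂
  have hL₁' : MemLp id 2 π.fst := by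
    rw [hπ₁, ← hd₁]; exact (memLp_map_measure_iff aestronglyMeasurable_id hm₁.aemeasurable).2 hL₁
  have hL₂' : MemLp id 2 π.snd := by
    rw [hπ₂, ← hd₂]; exact (memLp_map_measure_iff aestronglyMeasurable_id hm₂.aemeasurable).2 hL₂
  calc ∫ u in Icc (0:ℝ) 1, quantile F₁ u * quantile F₂ (1 - u)
      = ∫ p, p.1 * p.2 ∂antitoneCoupling F₁ F₂ := by
        rw [Measure.restrict_congr_set Ioo_ae_eq_Icc.symm, antitoneCoupling,
          integral_map (aemeasurable_antitoneCoupling F₁ F₂) (by fun_prop)]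
    _ ≤ ∫ p, p.1 * p.2 ∂π := hπ₁ ▸ hπ₂ ▸ integral_antitoneCoupling_le π hL₁' hL₂'
    _ = ∫ ω, X₁ ω * X₂ ω ∂μ := integral_map hX.aemeasurable (by fun_prop)
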